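/- A diagonally symmetric two-qudit state X is separable if and only if the d × d matrix Q with Q_{ij} = ⟨ij|X|ij⟩ is a completely positive matrix, i.e., Q = Σ_q v_q v_q^T for entrywise non-negative vectors v_q ∈ ℝ_+^d. -/

import Mathlib

open ComplexOrder

/-- The permutation operator `P_σ` on `(ℂ^d)^{⊗ι}`, sending `|i⟩` to `|i ∘ σ⁻¹⟩`. -/
def permMatrix (ι : Type) [Fintype ι] [DecidableEq ι] (d : ℕ) (σ : Equiv.Perm ι) :
    Matrix (ι → Fin d) (ι → Fin d) ℂ :=
  Matrix.of fun a b => if a = (fun k => b (σ⁻¹ k)) then 1 else 0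

/-- The orthogonal projection `Π = (1/n!) ∑_σ P_σ` onto the symmetric subspace. -/
noncomputable def symProj (ι : Type) [Fintype ι] [DecidableEq ι] (d : ℕ) :
    Matrix (ι → Fin d) (ι → Fin d) ℂ :=
  ((Nat.factorial (Fintype.card ι) : ℂ))⁻¹ • ∑ σ : Equiv.Perm ι, permMatrix ι d σ

/-- A matrix is diagonally symmetric if it is supported on the symmetric subspace
(`Π X Π = X`) and commutes with `U^{⊗n}` for every diagonal unitary `U`. -/
def IsDS (ι : Type) [Fintype ι] [DecidableEq ι] (d : ℕ)
    (X : Matrix (ι → Fin d) (ι → Fin d) ℂ) : Prop :=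
  symProj ι d * X * symProj ι d = X ∧
  ∀ θ : Fin d → ℝ,
    Matrix.diagonal (fun i : ι → Fin d => ∏ k, Complex.exp ((θ (i k) : ℂ) * Complex.I)) * X =
      X * Matrix.diagonal fun i : ι → Fin d => ∏ k, Complex.exp ((θ (i k) : ℂ) * Complex.I)

/-- Merge an assignment on the complement of `A` with an assignment on `A` into a full
multi-index. -/
def merge {n d : ℕ} (A : Finset (Fin n)) (j : {k : Fin n // k ∉ A} → Fin d)
    (i : {k : Fin n // k ∈ A} → Fin d) : Fin n → Fin d :=
  fun k => if h : k ∈ A then i ⟨k, h⟩ else j ⟨k, h⟩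

/-
Diagonal symmetry forces `X a b = 0` unless `a` and `b` have the same occupation numbers
(commute `X` with a diagonal unitary whose phases separate them), and then `X a b = X a a`
(invariance under permuting the tensor factors); so `X` is determined by `Q`. A separable
state has `Q i j = ∑ q, |v q i|² |v q j|²`, which is completely positive. Conversely, if
`Q = ∑ q, w q (w q)ᵀ` with `w q ≥ 0`, averaging the product states of `ζ ^ χ * √(w q)` over all
phase patterns `χ : Fin d → ℤ/4` kills, by orthogonality of characters, every entry between
basis states with different occupation numbers and leaves the diagonally symmetric state with
diagonal `w q (w q)ᵀ`; summing over `q` recovers `X`.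
-/

section Occupation

variable {ι α : Type*} [Fintype ι] [DecidableEq α]

def occupation (a : ι → α) (i : α) : ℕ := Fintype.card {k // a k = i}

lemma occupation_le_card (a : ι → α) (i : α) : occupation a i ≤ Fintype.card ι :=
  Fintype.card_subtype_le _

lemma prod_comp_eq_prod_pow_occupation [Fintype α] {M : Type*} [CommMonoid M] (f : α → M)
    (a : ι → α) : ∏ k, f (a k) = ∏ i, f i ^ occupation a i := by
  simp [← Fintype.prod_fiberwise' a f, occupation]

lemma exists_perm_eq_comp_of_occupation_eq {a b : ι → α} (h : occupation a = occupation b) :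
    ∃ σ : Equiv.Perm ι, b = a ∘ σ :=
  ⟨Equiv.ofFiberEquiv fun i => Fintype.equivOfCardEq (congrFun h i).symm,
    funext fun k => (Equiv.ofFiberEquiv_map _ k).symm⟩

end Occupation

lemma IsPrimitiveRoot.sum_pow_mul_inv_pow {K : Type*} [Field K] {ζ : K} {N s t : ℕ}
    (hζ : IsPrimitiveRoot ζ N) (hs : s < N) (ht : t < N) :
    ∑ m : Fin N, (ζ ^ (m : ℕ)) ^ s * ((ζ⁻¹) ^ (m : ℕ)) ^ t = if s = t then (N : K) else 0 := by
  have hgeom : ∀ m : ℕ, (ζ ^ m) ^ s * ((ζ⁻¹) ^ m) ^ t = (ζ ^ s * (ζ ^ t)⁻¹) ^ m := fun m => by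
    ring
  simp_rw [hgeom]
  rw [Fin.sum_univ_eq_sum_range (fun m => (ζ ^ s * (ζ ^ t)⁻¹) ^ m)]
  split_ifs with hst
  · simp [hst, hζ.ne_zero (by omega)]
  · have hr : ζ ^ s * (ζ ^ t)⁻¹ ≠ 1 := fun h =>
      hst (hζ.pow_inj hs ht (mul_inv_eq_one₀ (pow_ne_zero _ (hζ.ne_zero (by omega))) |>.1 h))
    have hrN : (ζ ^ s * (ζ ^ t)⁻¹) ^ N = 1 := by
      rw [mul_pow, inv_pow, ← pow_mul, ← pow_mul, mul_comm s, mul_comm t, pow_mul, pow_mul,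
        hζ.pow_eq_one, one_pow, one_pow, inv_one, mul_one]
    rw [geom_sum_eq hr, hrN, sub_self, zero_div]

def productState (ι : Type*) [Fintype ι] {d : ℕ} (v : Fin d → ℂ) :
    Matrix (ι → Fin d) (ι → Fin d) ℂ :=
  Matrix.of fun a b => (∏ k, v (a k)) * star (∏ k, v (b k))

/-- The average of `productState ι (√x)` over all diagonal unitaries `U^{⊗ι}`. -/
def dephasedState (ι : Type*) [Fintype ι] {d : ℕ} (x : Fin d → ℝ) :
    Matrix (ι → Fin d) (ι → Fin d) ℂ :=
  Matrix.of fun a b => if occupation a = occupation b then ((∏ k, x (a k) : ℝ) : ℂ) else 0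

section ProductState

variable {ι : Type*} [Fintype ι] {d : ℕ}

lemma productState_apply_self (v : Fin d → ℂ) (a : ι → Fin d) :
    productState ι v a a = ((∏ k, Complex.normSq (v (a k)) : ℝ) : ℂ) := by
  simp only [productState, Matrix.of_apply, star_prod, ← Finset.prod_mul_distrib,
    Complex.star_def, Complex.mul_conj]
  push_cast
  rfl

lemma dephasedState_smul (c : ℝ) (x : Fin d → ℝ) :
    dephasedState ι (c • x) = ((c ^ Fintype.card ι : ℝ) : ℂ) • dephasedState ι x := by
  ext a b
  simp [dephasedState, Finset.prod_mul_distrib]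

lemma exists_eq_sum_fin_productState {J : Type*} [Fintype J] (v : J → Fin d → ℂ) :
    ∃ (K : ℕ) (u : Fin K → Fin d → ℂ), ∑ j, productState ι (v j) = ∑ q, productState ι (u q) :=
  ⟨_, v ∘ (Fintype.equivFin J).symm, (Equiv.sum_comp (Fintype.equivFin J).symm _).symm⟩

/-- Orthogonality of the characters `χ ↦ ∏ₖ ζ ^ χ (a k)` of `(ℤ/N)^d`: two of them coincide
exactly when `a` and `b` have the same occupation numbers, which are `< N`. -/
lemma sum_prod_pow_mul_star_prod_pow {ζ : ℂ} {N : ℕ} (hζ : IsPrimitiveRoot ζ N)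
    (hN : Fintype.card ι < N) (a b : ι → Fin d) :
    ∑ χ : Fin d → Fin N, (∏ k, ζ ^ (χ (a k) : ℕ)) * star (∏ k, ζ ^ (χ (b k) : ℕ)) =
      if occupation a = occupation b then (N : ℂ) ^ d else 0 := by
  have hstar : star ζ = ζ⁻¹ := (Complex.inv_eq_conj (hζ.norm'_eq_one (by omega))).symm
  have hterm : ∀ χ : Fin d → Fin N,
      (∏ k, ζ ^ (χ (a k) : ℕ)) * star (∏ k, ζ ^ (χ (b k) : ℕ)) =
        ∏ i, (ζ ^ (χ i : ℕ)) ^ occupation a i * (ζ⁻¹ ^ (χ i : ℕ)) ^ occupation b i := by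
    intro χ
    rw [star_prod, Finset.prod_mul_distrib]
    simp only [star_pow, hstar]
    rw [prod_comp_eq_prod_pow_occupation (fun i => ζ ^ (χ i : ℕ)),
      prod_comp_eq_prod_pow_occupation (fun i => ζ⁻¹ ^ (χ i : ℕ))]
  simp_rw [hterm]
  rw [← Fintype.prod_sum fun i (m : Fin N) =>
    (ζ ^ (m : ℕ)) ^ occupation a i * (ζ⁻¹ ^ (m : ℕ)) ^ occupation b i]
  simp_rw [hζ.sum_pow_mul_inv_pow ((occupation_le_card a _).trans_lt hN)
    ((occupation_le_card b _).trans_lt hN)]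
  simp [Fintype.prod_ite_zero, funext_iff]

lemma sum_productState_phase {ζ : ℂ} {N : ℕ} (hζ : IsPrimitiveRoot ζ N)
    (hN : Fintype.card ι < N) (v : Fin d → ℂ) :
    ∑ χ : Fin d → Fin N, productState ι (fun i => ζ ^ (χ i : ℕ) * v i) =
      (N : ℂ) ^ d • Matrix.of fun a b =>
        if occupation a = occupation b then (∏ k, v (a k)) * star (∏ k, v (b k)) else 0 := by
  ext a b
  have hsplit : ∀ χ : Fin d → Fin N, productState ι (fun i => ζ ^ (χ i : ℕ) * v i) a b =
      ((∏ k, ζ ^ (χ (a k) : ℕ)) * star (∏ k, ζ ^ (χ (b k) : ℕ))) *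
        ((∏ k, v (a k)) * star (∏ k, v (b k))) := by
    intro χ
    simp only [productState, Matrix.of_apply, Finset.prod_mul_distrib, star_mul']
    ring
  simp only [Matrix.sum_apply, hsplit, ← Finset.sum_mul, sum_prod_pow_mul_star_prod_pow hζ hN,
    Matrix.smul_apply, Matrix.of_apply, smul_eq_mul]
  split_ifs <;> simp

lemma sum_productState_phase_sqrt {ζ : ℂ} {N : ℕ} (hζ : IsPrimitiveRoot ζ N)
    (hN : Fintype.card ι < N) {x : Fin d → ℝ} (hx : 0 ≤ x) :
    ∑ χ : Fin d → Fin N, productState ι (fun i => ζ ^ (χ i : ℕ) * (√(x i) : ℂ)) =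
      (N : ℂ) ^ d • dephasedState ι x := by
  rw [sum_productState_phase hζ hN]
  congr 1
  ext a b
  simp only [dephasedState, Matrix.of_apply]
  split_ifs with hab
  · rw [prod_comp_eq_prod_pow_occupation (fun i => (√(x i) : ℂ)) b, ← hab,
      ← prod_comp_eq_prod_pow_occupation, star_prod]
    simp_rw [Complex.star_def, Complex.conj_ofReal, ← Finset.prod_mul_distrib]
    push_cast
    exact Finset.prod_congr rfl fun k _ => by
      rw [← Complex.ofReal_mul, Real.mul_self_sqrt (hx _)]
  · rfl

end ProductState

section DiagonallySymmetric

variable {ι : Type} [Fintype ι] [DecidableEq ι] {d : ℕ}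

lemma mul_permMatrix_apply (X : Matrix (ι → Fin d) (ι → Fin d) ℂ) (σ : Equiv.Perm ι)
    (a b : ι → Fin d) : (X * permMatrix ι d σ) a b = X a (fun k => b (σ⁻¹ k)) := by
  simp [Matrix.mul_apply, permMatrix]

lemma permMatrix_mul_permMatrix (σ τ : Equiv.Perm ι) :
    permMatrix ι d σ * permMatrix ι d τ = permMatrix ι d (σ * τ) := by
  ext a b
  rw [mul_permMatrix_apply]
  simp [permMatrix, mul_inv_rev]

lemma symProj_mul_permMatrix (σ : Equiv.Perm ι) :
    symProj ι d * permMatrix ι d σ = symProj ι d := by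
  simp only [symProj, Matrix.smul_mul, Finset.sum_mul, permMatrix_mul_permMatrix]
  exact congrArg _ (Equiv.sum_comp (Equiv.mulRight σ) (permMatrix ι d))

lemma IsDS.mul_permMatrix {X : Matrix (ι → Fin d) (ι → Fin d) ℂ} (hX : IsDS ι d X)
    (σ : Equiv.Perm ι) : X * permMatrix ι d σ = X := by
  rw [← hX.1, Matrix.mul_assoc, symProj_mul_permMatrix]

lemma IsDS.apply_comp_perm {X : Matrix (ι → Fin d) (ι → Fin d) ℂ} (hX : IsDS ι d X)
    (σ : Equiv.Perm ι) (a b : ι → Fin d) : X a (b ∘ σ) = X a b := by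
  have h := congrFun (congrFun (hX.mul_permMatrix σ⁻¹) a) b
  rwa [mul_permMatrix_apply, inv_inv] at h

lemma IsDS.apply_eq_zero_of_occupation_ne {X : Matrix (ι → Fin d) (ι → Fin d) ℂ}
    (hX : IsDS ι d X) {a b : ι → Fin d} {i : Fin d} (hab : occupation a i ≠ occupation b i) :
    X a b = 0 := by
  set N := Fintype.card ι + 1
  set ζ := Complex.exp (2 * Real.pi * Complex.I / N)
  have hζ : IsPrimitiveRoot ζ N := Complex.isPrimitiveRoot_exp N (Nat.succ_ne_zero _)
  let θ : Fin d → ℝ := fun j => if j = i then 2 * Real.pi / N else 0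
  have hphase : ∀ c : ι → Fin d,
      ∏ k, Complex.exp ((θ (c k) : ℂ) * Complex.I) = ζ ^ occupation c i := by
    intro c
    rw [prod_comp_eq_prod_pow_occupation (fun j => Complex.exp ((θ j : ℂ) * Complex.I)),
      Finset.prod_eq_single i (fun j _ hj => by simp [θ, hj]) (by simp)]
    simp only [θ, if_pos rfl, ζ]
    congr 2
    push_cast
    ring
  have hcomm := congrFun (congrFun (hX.2 θ) a) b
  simp only [Matrix.diagonal_mul, Matrix.mul_diagonal, hphase] at hcomm
  have hne : ζ ^ occupation a i ≠ ζ ^ occupation b i := fun h =>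
    hab (hζ.pow_inj (Nat.lt_succ_of_le (occupation_le_card a i))
      (Nat.lt_succ_of_le (occupation_le_card b i)) h)
  exact (mul_eq_mul_right_iff.1 (hcomm.trans (mul_comm _ _))).resolve_left hne

lemma IsDS.apply_eq_ite {X : Matrix (ι → Fin d) (ι → Fin d) ℂ} (hX : IsDS ι d X)
    (a b : ι → Fin d) : X a b = if occupation a = occupation b then X a a else 0 := by
  split_ifs with hab
  · obtain ⟨σ, rfl⟩ := exists_perm_eq_comp_of_occupation_eq hab
    exact hX.apply_comp_perm σ a a
  · obtain ⟨i, hi⟩ := Function.ne_iff.1 hab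
    exact hX.apply_eq_zero_of_occupation_ne hi

end DiagonallySymmetric

theorem stmt_12_general (d : ℕ) (X : Matrix (Fin 2 → Fin d) (Fin 2 → Fin d) ℂ)
    (hDS : IsDS (Fin 2) d X) :
    (∃ (K : ℕ) (v : Fin K → Fin d → ℂ),
        X = ∑ q, Matrix.of fun a b : Fin 2 → Fin d =>
          (∏ k, v q (a k)) * star (∏ k, v q (b k))) ↔
      ∃ (K : ℕ) (w : Fin K → Fin d → ℝ), (∀ q i, 0 ≤ w q i) ∧
        ∀ i j : Fin d, X ![i, j] ![i, j] = ((∑ q, w q i * w q j : ℝ) : ℂ) := by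
  constructor
  · rintro ⟨K, v, rfl⟩
    refine ⟨K, fun q i => Complex.normSq (v q i), fun q i => Complex.normSq_nonneg _, ?_⟩
    intro i j
    change (∑ q, productState (Fin 2) (v q)) ![i, j] ![i, j] = _
    simp [Matrix.sum_apply, productState_apply_self, Fin.prod_univ_two]
  · rintro ⟨K, w, hw, hQ⟩
    have hX : X = ∑ q, dephasedState (Fin 2) (w q) := by
      ext a b
      rw [hDS.apply_eq_ite, Matrix.sum_apply]
      simp only [dephasedState, Matrix.of_apply, Finset.sum_ite_irrel, Finset.sum_const_zero]
      congr 1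
      obtain ⟨i, j, rfl⟩ : ∃ i j, a = ![i, j] := ⟨a 0, a 1, by ext k; fin_cases k <;> rfl⟩
      simpa [Fin.prod_univ_two] using hQ i j
    -- Scaling `w` by `2⁻ᵈ` cancels the `4 ^ d` phase patterns `χ : Fin d → Fin 4`.
    have htwirl : ∀ q, dephasedState (Fin 2) (w q) = ∑ χ : Fin d → Fin 4, productState (Fin 2)
        fun i => Complex.I ^ (χ i : ℕ) * (√((((2 : ℝ) ^ d)⁻¹ • w q) i) : ℂ) := by
      have hnorm :
          ((4 : ℕ) : ℂ) ^ d * (((((2 : ℝ) ^ d)⁻¹) ^ Fintype.card (Fin 2) : ℝ) : ℂ) = 1 := by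
        rw [Fintype.card_fin, ← inv_pow, ← pow_mul, pow_mul', Complex.ofReal_pow, ← mul_pow]
        norm_num
      intro q
      rw [sum_productState_phase_sqrt Complex.isPrimitiveRoot_I (by simp)
        (smul_nonneg (by positivity) (hw q)), dephasedState_smul, smul_smul, hnorm, one_smul]
    obtain ⟨K', u, hu⟩ := exists_eq_sum_fin_productState (ι := Fin 2)
      fun p : Fin K × (Fin d → Fin 4) =>
        fun i => Complex.I ^ (p.2 i : ℕ) * (√((((2 : ℝ) ^ d)⁻¹ • w p.1) i) : ℂ)
    refine ⟨K', u, ?_⟩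
    calc X = ∑ q, dephasedState (Fin 2) (w q) := hX
      _ = _ := Finset.sum_congr rfl fun q _ => htwirl q
      _ = _ := (Fintype.sum_prod_type' _).symm
      _ = _ := hu

/-- a diagonally symmetric two-qudit state `X` is separable (a non-negative
combination of `|v⟩⟨v|^{⊗2}`) iff the `d × d` matrix `Q_{ij} = ⟨ij|X|ij⟩` is a completely
positive matrix `Q = ∑_q v_q v_qᵀ` with `v_q` entrywise non-negative. -/
theorem stmt_12 (d : ℕ) (X : Matrix (Fin 2 → Fin d) (Fin 2 → Fin d) ℂ)
    (hDS : IsDS (Fin 2) d X) (hstate : X.PosSemidef) :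
    (∃ (K : ℕ) (v : Fin K → Fin d → ℂ),
        X = ∑ q, Matrix.of fun a b : Fin 2 → Fin d =>
          (∏ k, v q (a k)) * star (∏ k, v q (b k))) ↔
      ∃ (K : ℕ) (w : Fin K → Fin d → ℝ), (∀ q i, 0 ≤ w q i) ∧
        ∀ i j : Fin d, X ![i, j] ![i, j] = ((∑ q, w q i * w q j : ℝ) : ℂ) :=
  stmt_12_general d X hDS
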